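/- arXiv:1912.03710 — 2 statements merged into one kernel-verified Lean document; each statement's English description precedes it below -/
import Mathlib

section
/- Let R be an F-pure Noetherian ring of characteristic p, I₁,…,I_t ideals, J an ideal with I₁,…,I_t ⊆ √J. Then the sequence e ↦ |Ṽ(p^e)|/p^{et} is monotone increasing, where Ṽ(p^e) = {a ∈ ℕ_{>0}^t : I₁^{a₁}⋯I_t^{a_t} ⊄ J^{[p^e]}}. -/
open Ideal Filter MeasureTheory

/-- The `q`-th Frobenius power of an ideal: the ideal generated by `q`-th powers of its
elements (used with `q = p ^ e`). -/
def Ideal.frobPow {R : Type*} [CommRing R] (J : Ideal R) (q : ℕ) : Ideal R :=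
  Ideal.span ((fun a => a ^ q) '' (J : Set R))

/-- The set `V` of exponent vectors `a ∈ ℕ^t` with `I₁^{a₁} ⋯ I_t^{a_t} ⊄ J'`. -/
def Vnu {R : Type*} [CommRing R] {t : ℕ} (I : Fin t → Ideal R) (J' : Ideal R) :
    Set (Fin t → ℕ) :=
  {a | ¬ (∏ i, I i ^ a i) ≤ J'}

universe u v

/-- A ring homomorphism `f : R → S` is pure if for every `R`-module `M`, the natural map
`M → M ⊗_R S` (with `S` viewed as an `R`-module via `f`) is injective. -/
def RingHom.IsPureHom {R : Type u} {S : Type v} [CommRing R] [CommRing S]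
    (f : R →+* S) : Prop :=
  ∀ (M : Type (max u v)) [AddCommGroup M] [Module R M],
    letI : Module R S := Module.compHom S f
    Function.Injective (fun m : M => (TensorProduct.tmul R m (1 : S) : TensorProduct R M S))

/-- `R` is F-pure if the Frobenius endomorphism is a pure ring homomorphism. -/
def IsFPure (p : ℕ) (R : Type u) [CommRing R] [Fact p.Prime] [CharP R p] : Prop :=
  RingHom.IsPureHom (frobenius R p)

/-- The region `B^{J'}(I; q) = ⋃_{a ∈ V} ∏ᵢ [0, aᵢ/q] ⊆ ℝ^t`. -/
def Breg {R : Type*} [CommRing R] {t : ℕ} (I : Fin t → Ideal R) (J' : Ideal R) (q : ℕ) :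
    Set (Fin t → ℝ) :=
  ⋃ a ∈ Vnu I J', Set.univ.pi fun i => Set.Icc (0 : ℝ) ((a i : ℝ) / (q : ℝ))

/-- The variant `Ṽ` of `V` using strictly positive exponents. -/
def VnuPos {R : Type*} [CommRing R] {t : ℕ} (I : Fin t → Ideal R) (J' : Ideal R) :
    Set (Fin t → ℕ) :=
  {a | (∀ i, 0 < a i) ∧ ¬ (∏ i, I i ^ a i) ≤ J'}

/-! F-purity makes every ideal contracted from the Frobenius: `x ^ p ∈ B^{[p]}` forces `x ∈ B`.
So if `x ∈ I^a` avoids `J^{[p^e]}`, then `x ^ p ∈ I^{pa}` avoids `J^{[p^{e+1}]} ⊆ (J^{[p^e]})^{[p]}`,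
and every `c` with `0 < c ≤ p a` lies in `Ṽ(p^{e+1})`. Writing `c = p a - b` with `0 ≤ b < p`
recovers `(a, b)`, so `|Ṽ(p^{e+1})| ≥ p^t |Ṽ(p^e)|`. The sets are finite because a power of each
`Iᵢ` lies in `J^{[p^e]}`, whose radical contains that of `J`. -/

namespace Ideal

variable {R : Type*} [CommRing R]

theorem pow_mem_frobPow {J : Ideal R} {x : R} (hx : x ∈ J) (q : ℕ) : x ^ q ∈ J.frobPow q :=
  subset_span ⟨x, hx, rfl⟩

theorem frobPow_mul_le (J : Ideal R) (m n : ℕ) : J.frobPow (m * n) ≤ (J.frobPow m).frobPow n := by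
  rw [frobPow, span_le]
  rintro _ ⟨y, hy, rfl⟩
  simpa only [pow_mul, SetLike.mem_coe] using pow_mem_frobPow (pow_mem_frobPow hy m) n

theorem radical_le_radical_frobPow (J : Ideal R) (q : ℕ) : J.radical ≤ (J.frobPow q).radical := by
  rintro x ⟨n, hn⟩
  exact ⟨n * q, by simpa only [pow_mul] using pow_mem_frobPow hn q⟩

theorem map_frobenius_eq_frobPow (p : ℕ) [ExpChar R p] (B : Ideal R) :
    B.map (frobenius R p) = B.frobPow p :=
  congrArg span (Set.image_congr fun x _ => frobenius_def p x)

end Ideal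

theorem RingHom.IsPureHom.comap_map {R S : Type u} [CommRing R] [CommRing S] {f : R →+* S}
    (hf : f.IsPureHom) (B : Ideal R) : (B.map f).comap f = B := by
  -- Its underlying module is `Module.compHom S f`, the one in `IsPureHom`; purity is used for
  -- `M = R ⧸ B`, where `(R ⧸ B) ⊗ S ≃ S ⧸ B S`.
  let : Algebra R S := Algebra.compHom S f
  refine le_antisymm (fun x hx => ?_) Ideal.le_comap_map
  have hzero : Ideal.Quotient.mk B x ⊗ₜ[R] (1 : S) = 0 := by
    apply (TensorProduct.quotTensorEquivQuotSMul S B).injective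
    rw [map_zero, TensorProduct.quotTensorEquivQuotSMul_mk_tmul, Submodule.Quotient.mk_eq_zero,
      Ideal.smul_top_eq_map]
    change f x * 1 ∈ B.map f
    simpa using hx
  exact Ideal.Quotient.eq_zero_iff_mem.mp (hf (R ⧸ B) (by simpa using hzero))

namespace IsFPure

variable {R : Type u} [CommRing R] {p : ℕ} [Fact p.Prime] [CharP R p]

theorem mem_of_pow_mem_frobPow (hFP : IsFPure p R) {B : Ideal R} {x : R}
    (hx : x ^ p ∈ B.frobPow p) : x ∈ B := by
  rw [← RingHom.IsPureHom.comap_map hFP B, Ideal.map_frobenius_eq_frobPow]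
  exact hx

theorem not_pow_le_frobPow (hFP : IsFPure p R) {A B : Ideal R} (h : ¬ A ≤ B) :
    ¬ A ^ p ≤ B.frobPow p := by
  obtain ⟨x, hxA, hxB⟩ := SetLike.not_le_iff_exists.mp h
  exact fun hle => hxB (hFP.mem_of_pow_mem_frobPow (hle (Ideal.pow_mem_pow hxA p)))

theorem mem_vnuPos_frobPow_mul (hFP : IsFPure p R) {t : ℕ} {I : Fin t → Ideal R} {J : Ideal R}
    {q : ℕ} {a c : Fin t → ℕ} (ha : a ∈ VnuPos I (J.frobPow q))
    (hc : ∀ i, 0 < c i ∧ c i ≤ p * a i) : c ∈ VnuPos I (J.frobPow (q * p)) := by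
  refine ⟨fun i => (hc i).1, fun hle => hFP.not_pow_le_frobPow ha.2 ?_⟩
  calc (∏ i, I i ^ a i) ^ p = ∏ i, I i ^ (p * a i) := by
        simp only [← Finset.prod_pow, ← pow_mul, mul_comm]
    _ ≤ ∏ i, I i ^ c i :=
        Finset.prod_le_prod' fun i _ => Ideal.pow_le_pow_right (hc i).2
    _ ≤ J.frobPow (q * p) := hle
    _ ≤ (J.frobPow q).frobPow p := J.frobPow_mul_le q p

end IsFPure

theorem finite_vnuPos {R : Type*} [CommRing R] [IsNoetherianRing R] {t : ℕ}
    {I : Fin t → Ideal R} {J' : Ideal R} (hrad : ∀ i, I i ≤ J'.radical) :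
    (VnuPos I J').Finite := by
  choose k hk using fun i =>
    Ideal.exists_pow_le_of_le_radical_of_fg (hrad i) (IsNoetherian.noetherian (I i))
  refine (Set.Finite.pi fun i => Set.finite_Iio (k i)).subset fun a ha i _ => ?_
  by_contra hka
  rw [Set.mem_Iio, not_lt] at hka
  exact ha.2 <| (Ideal.prod_le_inf.trans (Finset.inf_le (Finset.mem_univ i))).trans
    ((Ideal.pow_le_pow_right hka).trans (hk i))

theorem Nat.eq_and_eq_of_mul_sub_eq_mul_sub {p a a' b b' : ℕ} (ha : 0 < a) (ha' : 0 < a')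
    (hb : b < p) (hb' : b' < p) (h : p * a - b = p * a' - b') : a = a' ∧ b = b' := by
  have hpa : p ≤ p * a := Nat.le_mul_of_pos_right p ha
  have hpa' : p ≤ p * a' := Nat.le_mul_of_pos_right p ha'
  obtain rfl : a = a' := by
    by_contra hne
    rcases Nat.lt_or_gt_of_ne hne with hlt | hlt
    · have : p * a + p ≤ p * a' := by nlinarith
      omega
    · have : p * a' + p ≤ p * a := by nlinarith
      omega
  exact ⟨rfl, by omega⟩

theorem ncard_mul_pow_le_ncard {ι : Type*} [Fintype ι] {S T : Set (ι → ℕ)} {p : ℕ}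
    (hT : T.Finite) (hS : ∀ a ∈ S, ∀ i, 0 < a i)
    (hST : ∀ a ∈ S, ∀ c : ι → ℕ, (∀ i, 0 < c i ∧ c i ≤ p * a i) → c ∈ T) :
    S.ncard * p ^ Fintype.card ι ≤ T.ncard := by
  have hbox : (Set.univ : Set (ι → Fin p)).ncard = p ^ Fintype.card ι := by
    simp [Nat.card_fun]
  rw [← hbox, ← Set.ncard_prod]
  refine Set.ncard_le_ncard_of_injOn (fun ab i => p * ab.1 i - ab.2 i) ?_ ?_ hT
  · rintro ⟨a, b⟩ ⟨ha, -⟩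
    refine hST a ha _ fun i => ⟨?_, Nat.sub_le _ _⟩
    change 0 < p * a i - b i
    have := Nat.le_mul_of_pos_right p (hS a ha i)
    have := (b i).isLt
    omega
  · rintro ⟨a, b⟩ ⟨ha, -⟩ ⟨a', b'⟩ ⟨ha', -⟩ h
    have := fun i => Nat.eq_and_eq_of_mul_sub_eq_mul_sub (hS a ha i) (hS a' ha' i)
      (b i).isLt (b' i).isLt (congrFun h i)
    simp only [Prod.mk.injEq]
    exact ⟨funext fun i => (this i).1, funext fun i => Fin.ext (this i).2⟩

/-- For `R` F-pure, the sequence `e ↦ |Ṽ(p^e)|/p^{et}` is monotone increasing. -/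
theorem stmt10 {R : Type u} [CommRing R] [IsNoetherianRing R] (p : ℕ) [Fact p.Prime]
    [CharP R p] (hFP : IsFPure p R) {t : ℕ} (I : Fin t → Ideal R) (J : Ideal R)
    (hrad : ∀ i, I i ≤ J.radical) :
    Monotone (fun e : ℕ => ((VnuPos I (J.frobPow (p ^ e))).ncard : ℝ) / (p : ℝ) ^ (e * t)) := by
  refine monotone_nat_of_le_succ fun e => ?_
  have hcard : (VnuPos I (J.frobPow (p ^ e))).ncard * p ^ t ≤
      (VnuPos I (J.frobPow (p ^ (e + 1)))).ncard := by
    simpa using ncard_mul_pow_le_ncard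
      (finite_vnuPos fun i => (hrad i).trans (J.radical_le_radical_frobPow _))
      (fun a ha => ha.1) fun a ha c hc => pow_succ p e ▸ hFP.mem_vnuPos_frobPow_mul ha hc
  have hp : (0 : ℝ) < p := mod_cast (Fact.out : p.Prime).pos
  rw [div_le_div_iff₀ (by positivity) (by positivity), add_one_mul, pow_add, ← mul_assoc,
    mul_right_comm]
  gcongr
  exact_mod_cast hcard
end

section
/- Let (R, 𝔪, K) be a Noetherian local ring of characteristic p of dimension d, f₁,…,f_t part of a system of parameters, I = (f₁,…,f_t), and J an 𝔪-primary ideal with I ⊆ J. Then for all e, the length λ(R/J^{[p^e]}) ≤ |V(p^e)| · λ(R/(I + J^{[p^e]})), where V(p^e) = {a ∈ ℕ^t : f₁^{a₁}⋯f_t^{a_t} ∉ J^{[p^e]}}. -/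
open Ideal Filter MeasureTheory

/-- The length of an `A`-module `M`: the Krull dimension of its lattice of submodules. -/
noncomputable def modLength (A M : Type*) [CommRing A] [AddCommGroup M] [Module A M] : ℕ∞ :=
  (Order.krullDim (Submodule A M)).unbotD 0

/-!
Write `J' = J^{[p^e]}`, `f^a = f₁^{a₁} ⋯ f_t^{a_t}` and `V = {a | f^a ∉ J'}`. As `f_i ∈ J`, we have
`f_i^{p^e} ∈ J'`, so `V` is finite; it contains `0` unless `J' = R`. Adjoin the monomials `f^a`,
`a ∈ V`, to `J'` one at a time, always taking an `a` maximal among those not yet adjoined. Then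
`f_i f^a = f^{a + eᵢ}` already lies in the ideal built so far, so each successive quotient is
cyclic, generated by `f^a` and killed by `I + J'`, hence of length at most `λ(R/(I + J'))`. After
`|V|` steps the ideal is `R`.
-/

open Set

lemma modLength_eq_length (A M : Type*) [CommRing A] [AddCommGroup M] [Module A M] :
    modLength A M = Module.length A M := by
  rw [modLength, ← Module.coe_length, WithBot.unbotD_coe]

section Length

variable {R M : Type*} [CommRing R] [AddCommGroup M] [Module R M]

lemma Module.length_span_singleton_le {C : Ideal R} {x : M} (hC : ∀ c ∈ C, c • x = 0) :
    Module.length R (R ∙ x) ≤ Module.length R (R ⧸ C) := by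
  rw [← (quotTorsionOfEquivSpanSingleton R M x).length_eq]
  exact Module.length_le_of_surjective _ (Submodule.factor_surjective (p' := torsionOf R M x) hC)

lemma Module.length_quotient_le_length_quotient_sup_span_add {N : Submodule R M} {x : M}
    {C : Ideal R} (hC : ∀ c ∈ C, c • x ∈ N) :
    Module.length R (M ⧸ N) ≤
      Module.length R (M ⧸ (N ⊔ R ∙ x)) + Module.length R (R ⧸ C) := by
  have hK : (N ⊔ R ∙ x).map N.mkQ = R ∙ N.mkQ x := by
    rw [Submodule.map_sup, Submodule.mkQ_map_self, bot_sup_eq, Submodule.map_span,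
      Set.image_singleton]
  set K := (N ⊔ R ∙ x).map N.mkQ
  rw [Module.length_eq_add_of_exact K.subtype K.mkQ K.injective_subtype K.mkQ_surjective
      (LinearMap.exact_subtype_mkQ K),
    (Submodule.quotientQuotientEquivQuotient N _ le_sup_left).length_eq, add_comm, hK]
  gcongr
  refine Module.length_span_singleton_le fun c hc => ?_
  rw [← map_smul, Submodule.mkQ_apply, Submodule.Quotient.mk_eq_zero]
  exact hC c hc

lemma Ideal.length_quotient_le_length_quotient_sup_span_add {A B : Ideal R} (hBA : B ≤ A) {x : R}
    {s : Set R} (hs : ∀ y ∈ s, y * x ∈ A) :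
    Module.length R (R ⧸ A) ≤
      Module.length R (R ⧸ (A ⊔ span {x})) + Module.length R (R ⧸ (span s ⊔ B)) := by
  refine Module.length_quotient_le_length_quotient_sup_span_add fun c hc => ?_
  have hann : span s ⊔ B ≤ A.colon {x} := sup_le
    (span_le.mpr fun y hy => Submodule.mem_colon_singleton.mpr (hs y hy))
    (fun c hc => Submodule.mem_colon_singleton.mpr (A.mul_mem_right _ (hBA hc)))
  exact Submodule.mem_colon_singleton.mp (hann hc)

end Length

section Monomials

variable {R : Type*} [CommRing R] {t : ℕ}

def powProd (f : Fin t → R) (a : Fin t → ℕ) : R :=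
  ∏ i, f i ^ a i

variable (f : Fin t → R) (J : Ideal R)

@[simp]
lemma powProd_zero : powProd f 0 = 1 := by
  simp [powProd]

lemma powProd_add_single (a : Fin t → ℕ) (i : Fin t) :
    powProd f (a + Pi.single i 1) = f i * powProd f a := by
  simp only [powProd, Pi.add_apply, pow_add, Finset.prod_mul_distrib, Pi.single_apply, pow_ite,
    pow_one, pow_zero, Finset.prod_ite_eq', Finset.mem_univ, if_true, mul_comm]

lemma finite_setOf_powProd_notMem (hf : ∀ i, ∃ n, f i ^ n ∈ J) :
    {a | powProd f a ∉ J}.Finite := by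
  choose n hn using hf
  refine (Set.Finite.pi fun i => Set.finite_Iio (n i)).subset fun a ha i _ => ?_
  by_contra hle
  exact ha (J.mem_of_dvd (Finset.dvd_prod_of_mem _ (Finset.mem_univ i))
    (J.pow_mem_of_pow_mem (hn i) (not_lt.mp hle)))

variable {f J}

lemma mul_powProd_mem_sup_span_erase {S : Finset (Fin t → ℕ)}
    (hS : ∀ a ∈ S, ∀ b, a ≤ b → powProd f b ∉ J → b ∈ S) {a : Fin t → ℕ} (ha : a ∈ S)
    (i : Fin t) :
    f i * powProd f a ∈ J ⊔ span (powProd f '' ↑(S.erase a)) := by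
  rw [← powProd_add_single]
  by_cases hJ : powProd f (a + Pi.single i 1) ∈ J
  · exact mem_sup_left hJ
  refine mem_sup_right (subset_span (mem_image_of_mem _ (Finset.mem_erase.mpr ⟨?_, ?_⟩)))
  · exact fun h => by simpa using congrFun h i
  · exact hS a ha _ le_self_add hJ

lemma length_quotient_le_length_quotient_sup_add_card_mul (S : Finset (Fin t → ℕ))
    (hS : ∀ a ∈ S, ∀ b, a ≤ b → powProd f b ∉ J → b ∈ S) :
    Module.length R (R ⧸ J) ≤ Module.length R (R ⧸ (J ⊔ span (powProd f '' S))) +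
      S.card * Module.length R (R ⧸ (span (range f) ⊔ J)) := by
  induction S using Finset.strongInduction with
  | H S ih =>
  obtain rfl | hne := S.eq_empty_or_nonempty
  · rw [Finset.coe_empty, image_empty, span_empty, sup_bot_eq, Finset.card_empty, Nat.cast_zero,
      zero_mul, add_zero]
  obtain ⟨a, haS, hmin⟩ := Finset.exists_minimal hne
  have hS' : ∀ x ∈ S.erase a, ∀ b, x ≤ b → powProd f b ∉ J → b ∈ S.erase a := by
    intro x hx b hxb hb
    obtain ⟨hxa, hxS⟩ := Finset.mem_erase.mp hx
    refine Finset.mem_erase.mpr ⟨?_, hS x hxS b hxb hb⟩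
    rintro rfl
    exact hxa (le_antisymm hxb (hmin hxS hxb))
  have hstep := Ideal.length_quotient_le_length_quotient_sup_span_add le_sup_left
    (forall_mem_range.mpr (mul_powProd_mem_sup_span_erase hS haS))
  have hsup : J ⊔ span (powProd f '' ↑(S.erase a)) ⊔ span {powProd f a} =
      J ⊔ span (powProd f '' S) := by
    rw [← Finset.insert_erase haS, Finset.coe_insert, image_insert_eq, span_insert,
      sup_left_comm, sup_comm, Finset.erase_insert (Finset.notMem_erase a S)]
  rw [hsup] at hstep
  set L := Module.length R (R ⧸ (span (range f) ⊔ J))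
  calc Module.length R (R ⧸ J)
      ≤ Module.length R (R ⧸ (J ⊔ span (powProd f '' ↑(S.erase a)))) +
          (S.erase a).card * L :=
        ih _ (Finset.erase_ssubset haS) hS'
    _ ≤ Module.length R (R ⧸ (J ⊔ span (powProd f '' S))) + L + (S.erase a).card * L := by
        gcongr
    _ = Module.length R (R ⧸ (J ⊔ span (powProd f '' S))) + S.card * L := by
        rw [← Finset.card_erase_add_one haS]
        push_cast
        ring

theorem length_quotient_le_ncard_mul (hf : ∀ i, ∃ n, f i ^ n ∈ J) :
    Module.length R (R ⧸ J) ≤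
      {a | powProd f a ∉ J}.ncard * Module.length R (R ⧸ (span (range f) ⊔ J)) := by
  have hfin := finite_setOf_powProd_notMem f J hf
  have htop : J ⊔ span (powProd f '' hfin.toFinset) = ⊤ := by
    rw [eq_top_iff_one, ← powProd_zero f]
    by_cases h0 : powProd f 0 ∈ J
    · exact mem_sup_left h0
    · exact mem_sup_right (subset_span (mem_image_of_mem _ (hfin.mem_toFinset.mpr h0)))
  have key := length_quotient_le_length_quotient_sup_add_card_mul hfin.toFinset
    fun a _ b _ hb => hfin.mem_toFinset.mpr hb
  rwa [htop, Module.length_eq_zero (M := R ⧸ (⊤ : Ideal R)), zero_add,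
    ← Set.ncard_eq_toFinset_card _ hfin] at key

end Monomials

lemma Ideal.pow_mem_frobPow_s17 {R : Type*} [CommRing R] {J : Ideal R} {x : R} (hx : x ∈ J)
    (q : ℕ) :
    x ^ q ∈ J.frobPow q :=
  subset_span ⟨x, hx, rfl⟩

lemma Vnu_span_singleton {R : Type*} [CommRing R] {t : ℕ} (f : Fin t → R) (J : Ideal R) :
    Vnu (fun i => span {f i}) J = {a | powProd f a ∉ J} := by
  ext a
  simp [Vnu, powProd, span_singleton_pow, prod_span_singleton]

theorem stmt17_general {R : Type*} [CommRing R] (p : ℕ) {t : ℕ} (f : Fin t → R)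
    (I J : Ideal R) (hI : I = Ideal.span (Set.range f)) (hIJ : I ≤ J) (e : ℕ) :
    modLength R (R ⧸ J.frobPow (p ^ e)) ≤
      ((Vnu (fun i => Ideal.span {f i}) (J.frobPow (p ^ e))).ncard : ℕ∞) *
        modLength R (R ⧸ (I ⊔ J.frobPow (p ^ e))) := by
  subst hI
  rw [modLength_eq_length, modLength_eq_length, Vnu_span_singleton]
  exact length_quotient_le_ncard_mul
    fun i => ⟨p ^ e, pow_mem_frobPow_s17 (hIJ (subset_span ⟨i, rfl⟩)) _⟩

/-- For `f₁,…,f_t` part of a system of parameters of a Noetherian local ring, `I = (f)`,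
and `J` an `𝔪`-primary ideal containing `I`:
`λ(R/J^{[p^e]}) ≤ |V(p^e)| · λ(R/(I + J^{[p^e]}))` for all `e`. -/
theorem stmt17 {R : Type*} [CommRing R] [IsNoetherianRing R] [IsLocalRing R] (p : ℕ)
    [Fact p.Prime] [CharP R p] {t : ℕ} (f : Fin t → R)
    (hsop : ∃ (s : ℕ) (g : Fin s → R),
      ringKrullDim R = ((t + s : ℕ) : WithBot (WithTop ℕ)) ∧
      (Ideal.span (Set.range f ∪ Set.range g)).radical = IsLocalRing.maximalIdeal R)
    (I J : Ideal R) (hI : I = Ideal.span (Set.range f))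
    (hJprim : J.radical = IsLocalRing.maximalIdeal R) (hIJ : I ≤ J) (e : ℕ) :
    modLength R (R ⧸ J.frobPow (p ^ e)) ≤
      ((Vnu (fun i => Ideal.span {f i}) (J.frobPow (p ^ e))).ncard : ℕ∞) *
        modLength R (R ⧸ (I ⊔ J.frobPow (p ^ e))) :=
  stmt17_general p f I J hI hIJ e
end
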